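/- arXiv:1612.00562 — 5 statements merged into one kernel-verified Lean document; each statement's English description precedes it below -/
import Mathlib

section
/- For 0 < α < 1 and the sequence p_n defined recursively by p_0 = 1 and p_n = Σ_{j=1}^{n} (a_{j-1} - a_j) p_{n-j}, each p_n satisfies 0 < p_n < 1 for n ≥ 1. -/
/-!
Put `w j = a (j - 1) - a j`. Strict concavity of `x ↦ x ^ (1 - α)` makes the increments `a` strictly
decreasing, so every `w j` is positive, and the weights telescope: `∑_{j=1}^n w j = 1 - a n < 1`.
By strong induction, `p n` is then a weighted sum of earlier values in `(0, 1]` with positive weights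
of total mass strictly below `1`.
-/

open Real Finset

theorem sum_Icc_one_sub_pred {M : Type*} [AddCommGroup M] (f : ℕ → M) (n : ℕ) :
    ∑ j ∈ Icc 1 n, (f (j - 1) - f j) = f 0 - f n := by
  induction n with
  | zero => simp
  | succ n ih =>
    rw [sum_Icc_succ_top (by omega), ih, Nat.add_sub_cancel]
    abel

section Renewal

variable {a p : ℕ → ℝ} (ha : StrictAnti a) (ha_pos : ∀ n, 0 < a n) (ha0 : a 0 = 1)
  (hp : ∀ n, 1 ≤ n → p n = ∑ j ∈ Icc 1 n, (a (j - 1) - a j) * p (n - j))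
include ha ha_pos ha0 hp

theorem renewal_pos_lt_one_of_forall_lt {n : ℕ} (hn : 1 ≤ n)
    (hprev : ∀ m < n, 0 < p m ∧ p m ≤ 1) : 0 < p n ∧ p n < 1 := by
  have hw : ∀ j ∈ Icc 1 n, 0 < a (j - 1) - a j := fun j hj =>
    sub_pos.2 (ha (by simp at hj; omega))
  rw [hp n hn]
  constructor
  · refine sum_pos (fun j hj => mul_pos (hw j hj) (hprev _ ?_).1) ⟨1, by simp [hn]⟩
    simp at hj; omega
  · calc ∑ j ∈ Icc 1 n, (a (j - 1) - a j) * p (n - j)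
        ≤ ∑ j ∈ Icc 1 n, (a (j - 1) - a j) := by
          refine sum_le_sum fun j hj => mul_le_of_le_one_right (hw j hj).le (hprev _ ?_).2
          simp at hj; omega
      _ = 1 - a n := by rw [sum_Icc_one_sub_pred, ha0]
      _ < 1 := sub_lt_self 1 (ha_pos n)

theorem renewal_pos_lt_one (hp0 : p 0 = 1) : ∀ n, 1 ≤ n → 0 < p n ∧ p n < 1 := by
  intro n
  induction n using Nat.strong_induction_on with
  | _ n ih =>
    refine fun hn => renewal_pos_lt_one_of_forall_lt ha ha_pos ha0 hp hn fun m hm => ?_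
    rcases Nat.eq_zero_or_pos m with rfl | hm0
    · simp [hp0]
    · exact (ih m hm hm0).imp_right le_of_lt

end Renewal

section RpowIncrements

variable {s : ℝ} (hs0 : 0 < s)
include hs0

theorem rpow_succ_sub_rpow_pos (x : ℕ) : 0 < ((x : ℝ) + 1) ^ s - (x : ℝ) ^ s :=
  sub_pos.2 (rpow_lt_rpow (Nat.cast_nonneg x) (lt_add_one _) hs0)

theorem strictAnti_rpow_succ_sub_rpow (hs1 : s < 1) :
    StrictAnti fun i : ℕ => ((i : ℝ) + 1) ^ s - (i : ℝ) ^ s := by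
  refine strictAnti_nat_of_succ_lt fun i => ?_
  have h := (strictConcaveOn_rpow hs0 hs1).slope_anti_adjacent
    (x := (i : ℝ)) (y := i + 1) (z := i + 1 + 1) (by simp) (by simp; positivity) (by simp) (by simp)
  simpa [add_sub_cancel_left, div_one] using h

end RpowIncrements

theorem stmt_1 (α : ℝ) (hα0 : 0 < α) (hα1 : α < 1)
    (a : ℕ → ℝ) (ha : ∀ i : ℕ, a i = ((i : ℝ) + 1) ^ (1 - α) - (i : ℝ) ^ (1 - α))
    (p : ℕ → ℝ) (hp0 : p 0 = 1)
    (hp : ∀ n : ℕ, 1 ≤ n → p n = ∑ j ∈ Finset.Icc 1 n, (a (j - 1) - a j) * p (n - j)) :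
    ∀ n : ℕ, 1 ≤ n → 0 < p n ∧ p n < 1 := by
  have hs0 : 0 < 1 - α := sub_pos.2 hα1
  have ha_eq : a = fun i : ℕ => ((i : ℝ) + 1) ^ (1 - α) - (i : ℝ) ^ (1 - α) := funext ha
  subst ha_eq
  refine renewal_pos_lt_one (strictAnti_rpow_succ_sub_rpow hs0 (by linarith))
    (rpow_succ_sub_rpow_pos hs0) ?_ hp hp0
  simp [zero_rpow hs0.ne']
end

section
/- For 0 < α < 1 and all 1 ≤ k ≤ n, the sum Σ_{j=k}^{n} p_{n-j} a_{j-k} equals 1. -/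
open Real Finset

theorem stmt_2 (α : ℝ) (hα0 : 0 < α) (hα1 : α < 1)
    (a : ℕ → ℝ) (ha : ∀ i : ℕ, a i = ((i : ℝ) + 1) ^ (1 - α) - (i : ℝ) ^ (1 - α))
    (p : ℕ → ℝ) (hp0 : p 0 = 1)
    (hp : ∀ n : ℕ, 1 ≤ n → p n = ∑ j ∈ Finset.Icc 1 n, (a (j - 1) - a j) * p (n - j)) :
    ∀ k n : ℕ, 1 ≤ k → k ≤ n → ∑ j ∈ Finset.Icc k n, p (n - j) * a (j - k) = 1 := by
  have ha0 : a 0 = 1 := by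
    rw [ha]
    simp [Real.zero_rpow (by linarith : (1:ℝ) - α ≠ 0)]
  have key : ∀ m, ∑ i ∈ Finset.range (m + 1), p (m - i) * a i = 1 := by
    intro m
    induction m with
    | zero => simp [hp0, ha0]
    | succ m ih =>
      rw [Finset.sum_range_succ']
      have hpm : p (m + 1) = ∑ i ∈ Finset.range (m + 1), (a i - a (i + 1)) * p (m - i) := by
        rw [hp (m + 1) (by omega), ← Finset.Ico_add_one_right_eq_Icc, Finset.sum_Ico_eq_sum_range]
        apply Finset.sum_congr (by congr 1)
        intro i _
        rw [show 1 + i - 1 = i by omega, show m + 1 - (1 + i) = m - i by omega,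
          show 1 + i = i + 1 by omega]
      have : ∀ i ∈ Finset.range (m + 1),
          p (m + 1 - (i + 1)) * a (i + 1) = p (m - i) * a (i + 1) := by
        intro i _
        congr 2
        omega
      rw [Finset.sum_congr rfl this, Nat.sub_zero, hpm, ha0, mul_one, ← Finset.sum_add_distrib, ← ih]
      apply Finset.sum_congr rfl
      intro i _
      ring
  intro k n hk hkn
  rw [← Finset.Ico_add_one_right_eq_Icc, Finset.sum_Ico_eq_sum_range]
  have hrange : n + 1 - k = (n - k) + 1 := by omega
  rw [hrange]
  rw [← key (n - k)]
  apply Finset.sum_congr rfl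
  intro i hi
  simp only [Finset.mem_range] at hi
  congr 2 <;> omega
end

section
/- For 0 < α < 1 and all n ≥ 1, Γ(2-α) · Σ_{j=1}^{n} p_{n-j} ≤ n^α / Γ(1+α). -/
/-!
Write `Q n = ∑_{k<n} p_k`. Summing the recursion for `p` gives the renewal equation
`Q n = 1 + ∑_{j=1}^n (a_{j-1} - a_j) Q (n-j)`, whose kernel is nonnegative because `x ↦ x^{1-α}`
is concave; hence `Q` lies below every supersolution. `V n = n^α / (Γ(1+α) Γ(2-α))` is one:
after Abel summation this is `Γ(1+α) Γ(2-α) ≤ ∑_{i<n} a_i ((n-i)^α - (n-i-1)^α)`. The `i`-th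
term is the product of `∫_i^{i+1} (1-α) x^{-α}` and `∫_i^{i+1} α (n-x)^{α-1}`, integrals of a
decreasing and an increasing function, so by Chebyshev's integral inequality it dominates the
integral of their product over `[i, i+1]`. Summing over `i` gives the Beta integral
`(1-α) α B(1-α, α) = Γ(2-α) Γ(1+α)`.
-/

open Real Finset MeasureTheory

theorem sum_Icc_one_eq_sum_range {M : Type*} [AddCommMonoid M] (f : ℕ → M) (n : ℕ) :
    ∑ j ∈ Icc 1 n, f j = ∑ i ∈ range n, f (i + 1) := by
  rw [← Ico_add_one_right_eq_Icc, sum_Ico_eq_sum_range, Nat.add_sub_cancel]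
  simp only [add_comm]

theorem sum_Icc_one_sub_eq_sum_range {M : Type*} [AddCommMonoid M] (f : ℕ → M) (n : ℕ) :
    ∑ j ∈ Icc 1 n, f (n - j) = ∑ k ∈ range n, f k := by
  rw [sum_Icc_one_eq_sum_range, ← sum_range_reflect f n]
  exact sum_congr rfl fun i _ ↦ by rw [Nat.sub_add_eq, Nat.sub_right_comm]

theorem sum_Icc_sub_mul_eq {R : Type*} [CommRing R] (a V : ℕ → R) (m : ℕ) :
    ∑ j ∈ Icc 1 m, (a (j - 1) - a j) * V (m - j)
      = a 0 * V m - a m * V 0 - ∑ i ∈ range m, a i * (V (m - i) - V (m - i - 1)) := by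
  have h := sum_range_succ' (fun i ↦ a i * V (m - i)) m
  rw [sum_range_succ, Nat.sub_self, Nat.sub_zero] at h
  simp only [sum_Icc_one_eq_sum_range, Nat.add_sub_cancel, sub_mul, mul_sub, sum_sub_distrib,
    Nat.sub_add_eq] at h ⊢
  linear_combination h

theorem sum_range_eq_one_add_sum_Icc {R : Type*} [Semiring R] {b p : ℕ → R} (hp0 : p 0 = 1)
    (hp : ∀ n, 1 ≤ n → p n = ∑ j ∈ Icc 1 n, b j * p (n - j)) {m : ℕ} (hm : 1 ≤ m) :
    ∑ k ∈ range m, p k = 1 + ∑ j ∈ Icc 1 m, b j * ∑ k ∈ range (m - j), p k := by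
  induction m, hm using Nat.le_induction with
  | base => simp [hp0]
  | succ m hm ih =>
    have hshift : ∀ j ∈ Icc 1 m, m + 1 - j = m - j + 1 := fun j hj ↦ by
      have := (mem_Icc.1 hj).2
      omega
    rw [sum_range_succ, ih, hp m hm, sum_Icc_succ_top (by omega), Nat.sub_self, range_zero,
      sum_empty, mul_zero, add_zero, add_assoc, ← sum_add_distrib]
    congr 1
    refine sum_congr rfl fun j hj ↦ ?_
    rw [hshift j hj, sum_range_succ, mul_add]

theorem le_of_le_add_sum_Icc_of_add_sum_Icc_le {b c Q V : ℕ → ℝ}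
    (hb : ∀ j, 1 ≤ j → 0 ≤ b j) (h0 : Q 0 ≤ V 0)
    (hQ : ∀ m, 1 ≤ m → Q m ≤ c m + ∑ j ∈ Icc 1 m, b j * Q (m - j))
    (hV : ∀ m, 1 ≤ m → c m + ∑ j ∈ Icc 1 m, b j * V (m - j) ≤ V m) (n : ℕ) :
    Q n ≤ V n := by
  induction n using Nat.strong_induction_on with
  | _ n ih =>
    rcases Nat.eq_zero_or_pos n with rfl | hn
    · exact h0
    refine (hQ n hn).trans (le_trans ?_ (hV n hn))
    gcongr with j hj
    · exact hb j (mem_Icc.1 hj).1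
    · exact ih _ (by have := (mem_Icc.1 hj).1; omega)

theorem antitone_rpow_add_one_sub_rpow {β : ℝ} (hβ0 : 0 ≤ β) (hβ1 : β ≤ 1) :
    Antitone fun i : ℕ ↦ ((i : ℝ) + 1) ^ β - (i : ℝ) ^ β := by
  refine antitone_nat_of_succ_le fun k ↦ ?_
  have h := (concaveOn_rpow hβ0 hβ1).slope_anti_adjacent (x := k) (y := k + 1) (z := k + 2)
    (Set.mem_Ici.2 k.cast_nonneg) (Set.mem_Ici.2 (by positivity)) (by linarith) (by linarith)
  norm_num [add_assoc] at h ⊢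
  linarith

theorem setIntegral_mul_eq_zero_of_nonneg {X : Type*} [MeasurableSpace X] {μ : Measure X}
    {s : Set X} {φ g : X → ℝ} (hs : MeasurableSet s) (hφ : ∀ x ∈ s, 0 ≤ φ x)
    (hφi : IntegrableOn φ s μ) (h0 : ∫ x in s, φ x ∂μ = 0) :
    ∫ x in s, φ x * g x ∂μ = 0 := by
  have hae : φ =ᵐ[μ.restrict s] 0 :=
    (setIntegral_eq_zero_iff_of_nonneg_ae (ae_restrict_of_forall_mem hs hφ) hφi).1 h0
  refine integral_eq_zero_of_ae ?_
  filter_upwards [hae] with x hx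
  simp [hx]

theorem setIntegral_mul_nonpos_of_antitoneOn_of_monotoneOn {φ g : ℝ → ℝ} {a b : ℝ}
    (hφ : AntitoneOn φ (Set.Ioo a b)) (hg : MonotoneOn g (Set.Ioo a b))
    (hφi : IntegrableOn φ (Set.Ioo a b))
    (hφgi : IntegrableOn (fun x ↦ φ x * g x) (Set.Ioo a b))
    (h0 : ∫ x in Set.Ioo a b, φ x = 0) :
    ∫ x in Set.Ioo a b, φ x * g x ≤ 0 := by
  by_cases hnonneg : ∀ x ∈ Set.Ioo a b, 0 ≤ φ x
  · exact (setIntegral_mul_eq_zero_of_nonneg measurableSet_Ioo hnonneg hφi h0).le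
  by_cases hnonpos : ∀ x ∈ Set.Ioo a b, φ x ≤ 0
  · have h := setIntegral_mul_eq_zero_of_nonneg (g := g) measurableSet_Ioo
      (fun x hx ↦ neg_nonneg.2 (hnonpos x hx)) hφi.neg (by rw [integral_neg, h0, neg_zero])
    simp only [neg_mul, integral_neg, neg_eq_zero] at h
    exact h.le
  push Not at hnonneg hnonpos
  obtain ⟨v, hv, hφv⟩ := hnonneg
  obtain ⟨u, hu, hφu⟩ := hnonpos
  -- `φ ≥ 0` left of `t = inf {φ < 0}` and `φ ≤ 0` right of it, so `φ * (g - g t) ≤ 0`.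
  set S := {x | x ∈ Set.Ioo a b ∧ φ x < 0}
  have hS : BddBelow S := ⟨a, fun y hy ↦ hy.1.1.le⟩
  have hSne : S.Nonempty := ⟨v, hv, hφv⟩
  set t := sInf S
  have hut : u ≤ t := le_csInf hSne fun y hy ↦ by
    by_contra! hyu
    linarith [hφ hy.1 hu hyu.le, hy.2]
  have ht : t ∈ Set.Ioo a b := ⟨hu.1.trans_le hut, (csInf_le hS ⟨hv, hφv⟩).trans_lt hv.2⟩
  have hsign : ∀ x ∈ Set.Ioo a b, φ x * (g x - g t) ≤ 0 := by
    intro x hx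
    rcases lt_or_ge x t with hxt | htx
    · have hφx : 0 ≤ φ x := by
        by_contra! h
        exact (csInf_le hS ⟨hx, h⟩).not_gt hxt
      exact mul_nonpos_of_nonneg_of_nonpos hφx (by linarith [hg hx ht hxt.le])
    · rcases htx.eq_or_lt with rfl | htx
      · simp
      obtain ⟨y, hyS, hyx⟩ := exists_lt_of_csInf_lt hSne htx
      exact mul_nonpos_of_nonpos_of_nonneg (by linarith [hφ hyS.1 hx hyx.le, hyS.2])
        (by linarith [hg ht hx htx.le])
  have hshift : ∫ x in Set.Ioo a b, φ x * (g x - g t) = ∫ x in Set.Ioo a b, φ x * g x := by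
    simp_rw [mul_sub]
    rw [integral_sub hφgi (hφi.mul_const _), integral_mul_const, h0, zero_mul, sub_zero]
  rw [← hshift]
  exact setIntegral_nonpos measurableSet_Ioo hsign

theorem mul_integral_mul_le_integral_mul_integral {f g : ℝ → ℝ} {a b : ℝ} (hab : a < b)
    (hf : AntitoneOn f (Set.Ioo a b)) (hg : MonotoneOn g (Set.Ioo a b))
    (hfi : IntervalIntegrable f volume a b) (hgi : IntervalIntegrable g volume a b)
    (hfgi : IntervalIntegrable (fun x ↦ f x * g x) volume a b) :
    (b - a) * ∫ x in a..b, f x * g x ≤ (∫ x in a..b, f x) * ∫ x in a..b, g x := by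
  have hIoo : ∀ h : ℝ → ℝ, ∫ x in a..b, h x = ∫ x in Set.Ioo a b, h x := fun h ↦ by
    rw [intervalIntegral.integral_of_le hab.le, integral_Ioc_eq_integral_Ioo]
  set c := (∫ x in a..b, f x) / (b - a)
  have hφi : IntervalIntegrable (fun x ↦ f x - c) volume a b := hfi.sub intervalIntegrable_const
  have hφgi : IntervalIntegrable (fun x ↦ (f x - c) * g x) volume a b := by
    simp_rw [sub_mul]
    exact hfgi.sub (hgi.const_mul c)
  have hc : (b - a) * c = ∫ x in a..b, f x := mul_div_cancel₀ _ (sub_pos.2 hab).ne'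
  have h0 : ∫ x in a..b, (f x - c) = 0 := by
    rw [intervalIntegral.integral_sub hfi intervalIntegrable_const, intervalIntegral.integral_const,
      smul_eq_mul, hc, sub_self]
  have key := setIntegral_mul_nonpos_of_antitoneOn_of_monotoneOn
    (fun x hx y hy hxy ↦ sub_le_sub_right (hf hx hy hxy) c) hg
    ((intervalIntegrable_iff_integrableOn_Ioo_of_le hab.le).1 hφi)
    ((intervalIntegrable_iff_integrableOn_Ioo_of_le hab.le).1 hφgi) (by rw [← hIoo, h0])
  rw [← hIoo] at key
  simp_rw [sub_mul] at key
  rw [intervalIntegral.integral_sub hfgi (hgi.const_mul c), intervalIntegral.integral_const_mul]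
    at key
  calc (b - a) * ∫ x in a..b, f x * g x ≤ (b - a) * (c * ∫ x in a..b, g x) :=
        mul_le_mul_of_nonneg_left (by linarith) (sub_pos.2 hab).le
    _ = _ := by rw [← mul_assoc, hc]

theorem intervalIntegrable_sub_rpow {q : ℝ} (hq : -1 < q) (m s t : ℝ) :
    IntervalIntegrable (fun x ↦ (m - x) ^ q) volume s t := by
  simpa using
    (intervalIntegral.intervalIntegrable_rpow' hq (a := m - s) (b := m - t)).comp_sub_left m

theorem intervalIntegrable_rpow_mul_sub_rpow {r q m : ℝ} (hr : -1 < r) (hq : -1 < q)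
    (hm : 0 < m) : IntervalIntegrable (fun x ↦ x ^ r * (m - x) ^ q) volume 0 m := by
  refine IntervalIntegrable.trans (b := m / 2) ?_ ?_
  · refine (intervalIntegral.intervalIntegrable_rpow' hr).mul_continuousOn ?_
    refine (continuousOn_const.sub continuousOn_id).rpow_const fun x hx ↦ Or.inl ?_
    rw [Set.uIcc_of_le (by linarith)] at hx
    exact (by linarith [hx.2] : (0 : ℝ) < m - x).ne'
  · refine (intervalIntegrable_sub_rpow hq _ _ _).continuousOn_mul (continuousOn_id.rpow_const fun x hx ↦ Or.inl ?_)
    rw [Set.uIcc_of_le (by linarith)] at hx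
    exact (by linarith [hx.1] : (0 : ℝ) < x).ne'

theorem intervalIntegrable_rpow_mul_sub_rpow_of_le {r q m s t : ℝ} (hr : -1 < r) (hq : -1 < q)
    (hs : 0 ≤ s) (hst : s ≤ t) (htm : t ≤ m) :
    IntervalIntegrable (fun x ↦ x ^ r * (m - x) ^ q) volume s t := by
  rcases hst.eq_or_lt with rfl | hst
  · exact IntervalIntegrable.refl
  refine (intervalIntegrable_rpow_mul_sub_rpow hr hq (by linarith)).mono_set ?_
  rw [Set.uIcc_of_le hst.le, Set.uIcc_of_le (by linarith)]
  exact Set.Icc_subset_Icc hs htm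

theorem Gamma_add_mul_integral_rpow_mul_sub_rpow {u v m : ℝ} (hu : 0 < u) (hv : 0 < v)
    (hm : 0 < m) :
    Gamma (u + v) * ∫ x in 0..m, x ^ (u - 1) * (m - x) ^ (v - 1)
      = m ^ (u + v - 1) * (Gamma u * Gamma v) := by
  have hcpx : ∫ x in 0..m, ((x ^ (u - 1) * (m - x) ^ (v - 1) : ℝ) : ℂ)
      = ∫ x in 0..m, (x : ℂ) ^ ((u : ℂ) - 1) * ((m : ℂ) - x) ^ ((v : ℂ) - 1) := by
    refine intervalIntegral.integral_congr fun x hx ↦ ?_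
    rw [Set.uIcc_of_le hm.le] at hx
    rw [Complex.ofReal_mul, Complex.ofReal_cpow hx.1,
      Complex.ofReal_cpow (by linarith [hx.2] : (0 : ℝ) ≤ m - x)]
    push_cast
    rfl
  apply Complex.ofReal_injective
  rw [Complex.ofReal_mul, ← intervalIntegral.integral_ofReal, hcpx,
    Complex.betaIntegral_scaled _ _ hm, Complex.ofReal_mul, Complex.ofReal_mul,
    ← Complex.Gamma_ofReal, ← Complex.Gamma_ofReal, ← Complex.Gamma_ofReal,
    Complex.Gamma_mul_Gamma_eq_betaIntegral (by simpa using hu) (by simpa using hv),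
    Complex.ofReal_cpow hm.le]
  push_cast
  ring

section

variable {α : ℝ} (hα0 : 0 < α) (hα1 : α < 1)
include hα0 hα1

theorem mul_integral_rpow_neg_mul_sub_rpow_le {m s : ℝ} (hs : 0 ≤ s) (hsm : s + 1 ≤ m) :
    (1 - α) * α * ∫ x in s..s + 1, x ^ (-α) * (m - x) ^ (α - 1)
      ≤ ((s + 1) ^ (1 - α) - s ^ (1 - α)) * ((m - s) ^ α - (m - s - 1) ^ α) := by
  have hf : ∫ x in s..s + 1, x ^ (-α) = ((s + 1) ^ (1 - α) - s ^ (1 - α)) / (1 - α) := by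
    rw [integral_rpow (Or.inl (by linarith)), neg_add_eq_sub]
  have hg : ∫ x in s..s + 1, (m - x) ^ (α - 1) = ((m - s) ^ α - (m - s - 1) ^ α) / α := by
    rw [intervalIntegral.integral_comp_sub_left (fun y ↦ y ^ (α - 1)),
      integral_rpow (Or.inl (by linarith)), sub_add_cancel, sub_add_eq_sub_sub]
  have hcheb := mul_integral_mul_le_integral_mul_integral (lt_add_one s)
    (f := fun x ↦ x ^ (-α)) (g := fun x ↦ (m - x) ^ (α - 1))
    (fun x hx y _ hxy ↦ rpow_le_rpow_of_nonpos (hs.trans_lt hx.1) hxy (by linarith))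
    (fun x _ y hy hxy ↦ rpow_le_rpow_of_nonpos (by linarith [hy.2]) (by linarith) (by linarith))
    (intervalIntegral.intervalIntegrable_rpow' (by linarith))
    (intervalIntegrable_sub_rpow (by linarith) _ _ _)
    (intervalIntegrable_rpow_mul_sub_rpow_of_le (by linarith) (by linarith) hs (by linarith) hsm)
  rw [add_sub_cancel_left, one_mul, hf, hg] at hcheb
  have hpos : 0 < (1 - α) * α := mul_pos (sub_pos.2 hα1) hα0
  calc (1 - α) * α * ∫ x in s..s + 1, x ^ (-α) * (m - x) ^ (α - 1)
      ≤ (1 - α) * α * (((s + 1) ^ (1 - α) - s ^ (1 - α)) / (1 - α)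
          * (((m - s) ^ α - (m - s - 1) ^ α) / α)) := mul_le_mul_of_nonneg_left hcheb hpos.le
    _ = _ := by field_simp [(sub_pos.2 hα1).ne']

theorem Gamma_mul_Gamma_le_sum_range {m : ℕ} (hm : 1 ≤ m) :
    Gamma (1 + α) * Gamma (2 - α) ≤ ∑ i ∈ range m,
      (((i : ℝ) + 1) ^ (1 - α) - (i : ℝ) ^ (1 - α))
        * ((m - i : ℝ) ^ α - (m - i - 1 : ℝ) ^ α) := by
  have hm' : (0 : ℝ) < m := by exact_mod_cast hm
  have hbeta :=
    Gamma_add_mul_integral_rpow_mul_sub_rpow (u := 1 - α) (v := α) (by linarith) hα0 hm'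
  rw [sub_add_cancel, sub_self, rpow_zero, Gamma_one, one_mul, one_mul, sub_sub_cancel_left]
    at hbeta
  have hsplit := intervalIntegral.sum_integral_adjacent_intervals (a := fun i : ℕ ↦ (i : ℝ))
    (f := fun x ↦ x ^ (-α) * ((m : ℝ) - x) ^ (α - 1)) (μ := volume) (n := m) fun i hi ↦
      intervalIntegrable_rpow_mul_sub_rpow_of_le (by linarith) (by linarith) i.cast_nonneg
        (by exact_mod_cast i.le_succ) (by exact_mod_cast hi)
  simp only [Nat.cast_zero, Nat.cast_succ] at hsplit
  calc Gamma (1 + α) * Gamma (2 - α)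
      = (1 - α) * α * (Gamma (1 - α) * Gamma α) := by
        rw [add_comm, Gamma_add_one hα0.ne', show 2 - α = (1 - α) + 1 by ring,
          Gamma_add_one (by linarith)]
        ring
    _ = ∑ i ∈ range m,
          (1 - α) * α * ∫ x in (i : ℝ)..i + 1, x ^ (-α) * (m - x) ^ (α - 1) := by
        rw [← mul_sum, hsplit, hbeta]
    _ ≤ _ := sum_le_sum fun i hi ↦ mul_integral_rpow_neg_mul_sub_rpow_le hα0 hα1 i.cast_nonneg
        (by exact_mod_cast (mem_range.1 hi))

theorem one_add_sum_Icc_mul_rpow_div_le {a : ℕ → ℝ}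
    (ha : ∀ i : ℕ, a i = ((i : ℝ) + 1) ^ (1 - α) - (i : ℝ) ^ (1 - α)) {m : ℕ} (hm : 1 ≤ m) :
    1 + ∑ j ∈ Icc 1 m,
        (a (j - 1) - a j) * (((m - j : ℕ) : ℝ) ^ α / (Gamma (1 + α) * Gamma (2 - α)))
      ≤ (m : ℝ) ^ α / (Gamma (1 + α) * Gamma (2 - α)) := by
  set P := Gamma (1 + α) * Gamma (2 - α)
  have hP : 0 < P := mul_pos (Gamma_pos_of_pos (by linarith)) (Gamma_pos_of_pos (by linarith))
  have ha0 : a 0 = 1 := by simp [ha, zero_rpow (sub_pos.2 hα1).ne']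
  have hS :
      ∑ i ∈ range m, a i * (((m - i : ℕ) : ℝ) ^ α / P - ((m - i - 1 : ℕ) : ℝ) ^ α / P)
      = (∑ i ∈ range m, (((i : ℝ) + 1) ^ (1 - α) - (i : ℝ) ^ (1 - α))
          * ((m - i : ℝ) ^ α - (m - i - 1 : ℝ) ^ α)) / P := by
    rw [sum_div]
    refine sum_congr rfl fun i hi ↦ ?_
    have hi := mem_range.1 hi
    rw [ha, Nat.cast_sub (by omega : 1 ≤ m - i), Nat.cast_sub hi.le]
    push_cast
    ring
  rw [sum_Icc_sub_mul_eq a (fun k : ℕ ↦ (k : ℝ) ^ α / P), hS, ha0, Nat.cast_zero,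
    zero_rpow hα0.ne', zero_div, mul_zero, sub_zero, one_mul]
  have := (one_le_div hP).2 (Gamma_mul_Gamma_le_sum_range hα0 hα1 hm)
  linarith

end

theorem stmt_3 (α : ℝ) (hα0 : 0 < α) (hα1 : α < 1)
    (a : ℕ → ℝ) (ha : ∀ i : ℕ, a i = ((i : ℝ) + 1) ^ (1 - α) - (i : ℝ) ^ (1 - α))
    (p : ℕ → ℝ) (hp0 : p 0 = 1)
    (hp : ∀ n : ℕ, 1 ≤ n → p n = ∑ j ∈ Finset.Icc 1 n, (a (j - 1) - a j) * p (n - j)) :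
    ∀ n : ℕ, 1 ≤ n →
      Real.Gamma (2 - α) * ∑ j ∈ Finset.Icc 1 n, p (n - j)
        ≤ (n : ℝ) ^ α / Real.Gamma (1 + α) := by
  intro n _
  have hb : ∀ j, 0 ≤ a (j - 1) - a j := fun j ↦ by
    rw [ha, ha]
    exact sub_nonneg.2 <| antitone_rpow_add_one_sub_rpow (sub_pos.2 hα1).le (by linarith)
      (Nat.sub_le j 1)
  have hQ := le_of_le_add_sum_Icc_of_add_sum_Icc_le (fun j _ ↦ hb j) (c := fun _ ↦ 1)
    (Q := fun m ↦ ∑ k ∈ range m, p k)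
    (V := fun m : ℕ ↦ (m : ℝ) ^ α / (Gamma (1 + α) * Gamma (2 - α)))
    (by simp [zero_rpow hα0.ne'])
    (fun m hm ↦ (sum_range_eq_one_add_sum_Icc hp0 hp hm).le)
    (fun m hm ↦ one_add_sum_Icc_mul_rpow_div_le hα0 hα1 ha hm) n
  rw [sum_Icc_one_sub_eq_sum_range]
  calc Gamma (2 - α) * ∑ k ∈ range n, p k
      ≤ Gamma (2 - α) * ((n : ℝ) ^ α / (Gamma (1 + α) * Gamma (2 - α))) :=
        mul_le_mul_of_nonneg_left hQ (Gamma_pos_of_pos (by linarith)).le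
    _ = (n : ℝ) ^ α / Gamma (1 + α) := by
        field_simp [(Gamma_pos_of_pos (by linarith : 0 < 2 - α)).ne']
end

section
/- For a sequence of L² functions e^0, …, e^N, the discrete L1 fractional derivative tested against e^n satisfies (D_τ^α e^n, e^n) ≥ (1/2) D_τ^α ‖e^n‖²_{L²}, where D_τ^α e^n = (τ^{-α}/Γ(2-α)) Σ_{j=1}^n a_{n-j}(e^j - e^{j-1}). -/
/-!
Write `g j = ‖e j - e n‖²`. Expanding the squares turns each term of the difference
`⟪D e, e n⟫ - ½ D ‖e‖²` into `½ a (n - j) (g (j - 1) - g j)`, a sum with `g n = 0`, `g ≥ 0`.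
Summing by parts against the nonincreasing nonnegative weights `a` shows it is nonnegative.
The weights are nonincreasing because `x ↦ x ^ (1 - α)` is concave.
-/

open Real Finset

lemma ConcaveOn.antitone_natCast_succ_sub {f : ℝ → ℝ} (hf : ConcaveOn ℝ (Set.Ici 0) f) :
    Antitone fun i : ℕ => f (i + 1) - f i := by
  refine antitone_nat_of_succ_le fun i => ?_
  have hmid := hf.2 (Set.mem_Ici.2 (Nat.cast_nonneg' i))
    (Set.mem_Ici.2 (by positivity : (0 : ℝ) ≤ i + 2))
    (by norm_num : (0 : ℝ) ≤ 1 / 2) (by norm_num : (0 : ℝ) ≤ 1 / 2) (by norm_num)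
  simp only [smul_eq_mul] at hmid
  rw [show (1 / 2 : ℝ) * i + 1 / 2 * (i + 2) = i + 1 by ring] at hmid
  push_cast
  rw [show (i : ℝ) + 1 + 1 = i + 2 by ring]
  linarith

lemma antitone_rpow_succ_sub {p : ℝ} (hp0 : 0 ≤ p) (hp1 : p ≤ 1) :
    Antitone fun i : ℕ => ((i : ℝ) + 1) ^ p - (i : ℝ) ^ p :=
  (Real.concaveOn_rpow hp0 hp1).antitone_natCast_succ_sub

lemma rpow_succ_sub_nonneg {p : ℝ} (hp : 0 ≤ p) (i : ℕ) :
    0 ≤ ((i : ℝ) + 1) ^ p - (i : ℝ) ^ p :=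
  sub_nonneg.2 (Real.rpow_le_rpow (Nat.cast_nonneg i) (by linarith) hp)

lemma sub_le_sum_mul_sub_of_antitone {a h : ℕ → ℝ} (ha : Antitone a) (hh : ∀ k, 0 ≤ h k)
    (m : ℕ) : a m * h m - a 0 * h 0 ≤ ∑ k ∈ range m, a k * (h (k + 1) - h k) := by
  induction m with
  | zero => simp
  | succ m ih =>
    rw [sum_range_succ]
    nlinarith [mul_le_mul_of_nonneg_right (ha m.le_succ) (hh (m + 1))]

lemma sum_Icc_one_eq_sum_range_sub {M : Type*} [AddCommMonoid M] (F : ℕ → M) (n : ℕ) :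
    ∑ j ∈ Icc 1 n, F j = ∑ k ∈ range n, F (n - k) := by
  refine sum_nbij' (fun j => n - j) (fun k => n - k) ?_ ?_ ?_ ?_ ?_ <;>
    intro j hj <;> simp only [mem_Icc, mem_range] at hj ⊢ <;> first | omega | congr 1; omega

lemma sum_Icc_mul_sub_nonneg {a g : ℕ → ℝ} (ha : Antitone a) (ha0 : ∀ i, 0 ≤ a i)
    (hg : ∀ j, 0 ≤ g j) {n : ℕ} (hgn : g n = 0) :
    0 ≤ ∑ j ∈ Icc 1 n, a (n - j) * (g (j - 1) - g j) := by
  have hreflect : ∑ j ∈ Icc 1 n, a (n - j) * (g (j - 1) - g j)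
      = ∑ k ∈ range n, a k * (g (n - (k + 1)) - g (n - k)) := by
    rw [sum_Icc_one_eq_sum_range_sub]
    refine sum_congr rfl fun k hk => ?_
    rw [mem_range] at hk
    rw [show n - (n - k) = k by omega, show n - k - 1 = n - (k + 1) by omega]
  have hparts := sub_le_sum_mul_sub_of_antitone (h := fun k => g (n - k)) ha
    (fun k => hg _) n
  simp only [Nat.sub_self, Nat.sub_zero, hgn, mul_zero, sub_zero] at hparts
  rw [hreflect]
  exact (mul_nonneg (ha0 n) (hg 0)).trans hparts

lemma real_inner_sub_left_eq {H : Type*} [NormedAddCommGroup H] [InnerProductSpace ℝ H]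
    (x y z : H) :
    inner ℝ (x - y) z = (‖x‖ ^ 2 - ‖y‖ ^ 2) / 2 + (‖y - z‖ ^ 2 - ‖x - z‖ ^ 2) / 2 := by
  rw [norm_sub_sq_real, norm_sub_sq_real, inner_sub_left]
  ring

lemma half_sum_mul_sub_norm_sq_le_inner {H : Type*} [NormedAddCommGroup H]
    [InnerProductSpace ℝ H] {a : ℕ → ℝ} (ha : Antitone a) (ha0 : ∀ i, 0 ≤ a i)
    (e : ℕ → H) (n : ℕ) :
    1 / 2 * ∑ j ∈ Icc 1 n, a (n - j) * (‖e j‖ ^ 2 - ‖e (j - 1)‖ ^ 2)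
      ≤ inner ℝ (∑ j ∈ Icc 1 n, a (n - j) • (e j - e (j - 1))) (e n) := by
  have hsplit : inner ℝ (∑ j ∈ Icc 1 n, a (n - j) • (e j - e (j - 1))) (e n)
      = 1 / 2 * ∑ j ∈ Icc 1 n, a (n - j) * (‖e j‖ ^ 2 - ‖e (j - 1)‖ ^ 2)
        + 1 / 2 * ∑ j ∈ Icc 1 n,
          a (n - j) * (‖e (j - 1) - e n‖ ^ 2 - ‖e j - e n‖ ^ 2) := by
    simp only [sum_inner, real_inner_smul_left, real_inner_sub_left_eq, mul_sum,
      ← sum_add_distrib]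
    refine sum_congr rfl fun j _ => ?_
    ring
  have hrest := sum_Icc_mul_sub_nonneg ha ha0 (g := fun j => ‖e j - e n‖ ^ 2) (n := n)
    (fun j => by positivity) (by simp)
  linarith

theorem stmt_11 (α : ℝ) (hα0 : 0 < α) (hα1 : α < 1)
    (τ : ℝ) (hτ : 0 < τ)
    (a : ℕ → ℝ) (ha : ∀ i : ℕ, a i = ((i : ℝ) + 1) ^ (1 - α) - (i : ℝ) ^ (1 - α))
    (H : Type*) [NormedAddCommGroup H] [InnerProductSpace ℝ H]
    (N : ℕ) (e : ℕ → H) :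
    ∀ n : ℕ, 1 ≤ n → n ≤ N →
      inner ℝ ((τ ^ (-α) / Real.Gamma (2 - α)) •
          ∑ j ∈ Finset.Icc 1 n, a (n - j) • (e j - e (j - 1))) (e n)
        ≥ (1 / 2 : ℝ) * ((τ ^ (-α) / Real.Gamma (2 - α)) *
            ∑ j ∈ Finset.Icc 1 n, a (n - j) * (‖e j‖ ^ 2 - ‖e (j - 1)‖ ^ 2)) := by
  intro n _ _
  have hanti : Antitone a := by
    rw [funext ha]
    exact antitone_rpow_succ_sub (by linarith) (by linarith)
  have hnonneg (i : ℕ) : 0 ≤ a i := ha i ▸ rpow_succ_sub_nonneg (by linarith) i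
  have hc : 0 ≤ τ ^ (-α) / Real.Gamma (2 - α) :=
    div_nonneg (Real.rpow_nonneg hτ.le _) (Real.Gamma_pos_of_pos (by linarith)).le
  rw [ge_iff_le, real_inner_smul_left, mul_left_comm]
  exact mul_le_mul_of_nonneg_left (half_sum_mul_sub_norm_sq_le_inner hanti hnonneg e n) hc
end

section
/- For 0 < α < 1, m > 1/α, and 1 ≤ k ≤ j, the interpolation error term R_k^j = -(α/Γ(1-α)) ∫_{k-1}^{k} (q(s)-Q(s))/(j-s)^{α+1} ds satisfies R_k^j ≤ a_{j-k} ∫_{k-1}^{k} (k^{mα-1} - μ^{mα-1}) / (Γ(2-α)Γ(mα)) dμ, where q(t) = t^{mα}/Γ(1+mα) and Q is its piecewise linear interpolant on integer nodes. -/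
open Real intervalIntegral Set

/-!
On `[k - 1, k]` the interpolation error `Q - q` of the convex function `q` is nonnegative and,
since `q` lies above its tangent at `k`, at most `(k - s) D` with
`D = q'(k) - (q k - q (k - 1)) = ∫_{k-1}^k (k^(mα-1) - μ^(mα-1)) dμ / Γ(mα)`.
As `α (k - s) ≤ j - s`, the integrand is then dominated by `D (j - s)^(-α)`, whose integral is
`D a_(j-k) / (1 - α)`; finally `(1 - α) Γ(1 - α) = Γ(2 - α)`.
-/

theorem mul_div_rpow_add_one_le_rpow_neg {α u v : ℝ} (hα : α ≤ 1) (hu : 0 ≤ u) (huv : u ≤ v) :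
    α * (u / v ^ (α + 1)) ≤ v ^ (-α) := by
  rcases (hu.trans huv).eq_or_lt with rfl | hv
  · obtain rfl : u = 0 := le_antisymm huv hu
    simpa using rpow_nonneg le_rfl (-α)
  have hsplit : α * (u / v ^ (α + 1)) = v ^ (-α) * (α * u / v) := by
    rw [rpow_add hv, rpow_one, rpow_neg hv.le]
    field_simp
  have hαu : α * u / v ≤ 1 := by
    rw [div_le_one hv]
    nlinarith
  rw [hsplit]
  exact mul_le_of_le_one_right (rpow_nonneg hv.le _) hαu

theorem intervalIntegrable_sub_rpow_neg {α : ℝ} (hα : α < 1) (a b c : ℝ) :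
    IntervalIntegrable (fun s => (c - s) ^ (-α)) MeasureTheory.volume a b := by
  simpa using
    (intervalIntegrable_rpow' (a := c - a) (b := c - b) (r := -α) (by linarith)).comp_sub_left c

theorem integral_sub_rpow_neg {α : ℝ} (hα : α < 1) (a b c : ℝ) :
    ∫ s in a..b, (c - s) ^ (-α) = ((c - a) ^ (1 - α) - (c - b) ^ (1 - α)) / (1 - α) := by
  rw [integral_comp_sub_left (fun s => s ^ (-α)), integral_rpow (Or.inl (by linarith))]
  ring_nf

theorem integral_rpow_sub_rpow_div_Gamma {β : ℝ} (hβ : 0 < β) (a b : ℝ) :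
    ∫ μ in a..b, (b ^ (β - 1) - μ ^ (β - 1)) / Gamma β =
      (b - a) * (β * b ^ (β - 1) / Gamma (1 + β) - slope (fun t => t ^ β / Gamma (1 + β)) a b) := by
  have hchord := sub_smul_slope (fun t => t ^ β / Gamma (1 + β)) a b
  simp only [smul_eq_mul, vsub_eq_sub] at hchord
  rw [intervalIntegral.integral_div,
    integral_sub intervalIntegrable_const (intervalIntegrable_rpow' (by linarith)),
    integral_const, integral_rpow (Or.inl (by linarith)), sub_add_cancel, mul_sub, hchord,
    add_comm 1 β, Gamma_add_one hβ.ne']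
  have hΓ := (Gamma_pos_of_pos hβ).ne'
  have hβ' := hβ.ne'
  field_simp
  ring

namespace ConvexOn

variable {S : Set ℝ} {f : ℝ → ℝ} {a b t : ℝ}

theorem le_add_slope_mul_sub (hf : ConvexOn ℝ S f) (ha : a ∈ S) (hb : b ∈ S)
    (ht : t ∈ Icc a b) : f t ≤ f a + slope f a b * (t - a) := by
  rcases ht.1.eq_or_lt with rfl | hat
  · simp
  rcases ht.2.eq_or_lt with rfl | htb
  · have := sub_smul_slope f a t
    simp only [smul_eq_mul, vsub_eq_sub] at this
    linarith
  have hslope := hf.secant_mono_aux2 ha hb hat htb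
  rw [div_le_iff₀ (sub_pos.2 hat), ← slope_def_field] at hslope
  linarith

theorem add_slope_mul_sub_sub_le (hf : ConvexOn ℝ S f) (ha : a ∈ S) (hb : b ∈ S)
    (ht : t ∈ Icc a b) {f' : ℝ} (hf' : HasDerivAt f f' b) :
    f a + slope f a b * (t - a) - f t ≤ (b - t) * (f' - slope f a b) := by
  have hchord : f a + slope f a b * (t - a) = f b - slope f a b * (b - t) := by
    have := sub_smul_slope f a b
    simp only [smul_eq_mul, vsub_eq_sub] at this
    linarith
  rcases ht.2.eq_or_lt with rfl | htb
  · simp [hchord]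
  have htangent := hf.slope_le_of_hasDerivAt (hf.1.ordConnected.out ha hb ht) hb htb hf'
  rw [slope_def_field, div_le_iff₀ (sub_pos.2 htb)] at htangent
  rw [hchord]
  linarith


theorem neg_mul_integral_sub_interpolant_le {Q : ℝ → ℝ} {f' J α : ℝ}
    (hf : ConvexOn ℝ S f) (ha : a ∈ S) (hb : b ∈ S) (hab : a < b) (hf' : HasDerivAt f f' b)
    (hQ : ∀ t ∈ Icc a b, Q t = f a + slope f a b * (t - a)) (hbJ : b ≤ J)
    (hα0 : 0 ≤ α) (hα1 : α < 1) :
    -α * ∫ s in a..b, (f s - Q s) / (J - s) ^ (α + 1) ≤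
      (f' - slope f a b) * (((J - a) ^ (1 - α) - (J - b) ^ (1 - α)) / (1 - α)) := by
  have hD : 0 ≤ f' - slope f a b := sub_nonneg.2 (hf.slope_le_of_hasDerivAt ha hb hab hf')
  have hpointwise : ∀ s ∈ Icc a b,
      0 ≤ α * ((Q s - f s) / (J - s) ^ (α + 1)) ∧
      α * ((Q s - f s) / (J - s) ^ (α + 1)) ≤ (f' - slope f a b) * (J - s) ^ (-α) := by
    intro s hs
    have hw : 0 ≤ (J - s) ^ (α + 1) := rpow_nonneg (by linarith [hs.2]) _
    rw [hQ s hs]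
    refine ⟨mul_nonneg hα0 (div_nonneg (sub_nonneg.2 (hf.le_add_slope_mul_sub ha hb hs)) hw), ?_⟩
    calc α * ((f a + slope f a b * (s - a) - f s) / (J - s) ^ (α + 1))
        ≤ α * ((b - s) * (f' - slope f a b) / (J - s) ^ (α + 1)) := by
          gcongr
          exact hf.add_slope_mul_sub_sub_le ha hb hs hf'
      _ = (f' - slope f a b) * (α * ((b - s) / (J - s) ^ (α + 1))) := by ring
      _ ≤ (f' - slope f a b) * (J - s) ^ (-α) := by
          gcongr
          exact mul_div_rpow_add_one_le_rpow_neg hα1.le (by linarith [hs.2]) (by linarith)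
  have hflip : -α * ∫ s in a..b, (f s - Q s) / (J - s) ^ (α + 1) =
      ∫ s in a..b, α * ((Q s - f s) / (J - s) ^ (α + 1)) := by
    rw [integral_const_mul, ← neg_mul_neg, ← integral_neg]
    simp only [neg_neg, ← neg_div, neg_sub]
  rw [hflip, ← integral_sub_rpow_neg hα1, ← integral_const_mul,
    integral_of_le hab.le, integral_of_le hab.le]
  refine MeasureTheory.integral_mono_of_nonneg ?_
    ((intervalIntegrable_sub_rpow_neg hα1 a b J).const_mul _).1 ?_ <;>
  filter_upwards [MeasureTheory.ae_restrict_mem measurableSet_Ioc] with s hs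
  exacts [(hpointwise s (Ioc_subset_Icc_self hs)).1, (hpointwise s (Ioc_subset_Icc_self hs)).2]

end ConvexOn

theorem stmt_14 (α : ℝ) (hα0 : 0 < α) (hα1 : α < 1)
    (m : ℕ) (hmα : 1 < (m : ℝ) * α)
    (a : ℕ → ℝ) (ha : ∀ i : ℕ, a i = ((i : ℝ) + 1) ^ (1 - α) - (i : ℝ) ^ (1 - α))
    (q : ℝ → ℝ) (hq : ∀ t : ℝ, q t = t ^ ((m : ℝ) * α) / Real.Gamma (1 + (m : ℝ) * α))
    (Q : ℝ → ℝ)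
    (hQ : ∀ k : ℕ, ∀ t ∈ Set.Icc ((k : ℝ)) ((k : ℝ) + 1),
      Q t = q k + (q ((k : ℕ) + 1) - q k) * (t - k)) :
    ∀ k j : ℕ, 1 ≤ k → k ≤ j →
      -(α / Real.Gamma (1 - α)) *
          ∫ s in ((k : ℝ) - 1)..(k : ℝ), (q s - Q s) / ((j : ℝ) - s) ^ (α + 1)
        ≤ a (j - k) *
          ∫ μ in ((k : ℝ) - 1)..(k : ℝ),
            ((k : ℝ) ^ ((m : ℝ) * α - 1) - μ ^ ((m : ℝ) * α - 1)) /
              (Real.Gamma (2 - α) * Real.Gamma ((m : ℝ) * α)) := by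
  intro k j hk hkj
  obtain ⟨n, rfl⟩ : ∃ n, k = n + 1 := ⟨k - 1, by omega⟩
  set β := (m : ℝ) * α
  have hβ : 0 < β := by linarith
  obtain rfl : q = fun t => t ^ β / Gamma (1 + β) := funext hq
  have hconv : ConvexOn ℝ (Ici 0) fun t : ℝ => t ^ β / Gamma (1 + β) := by
    simpa only [smul_eq_mul, div_eq_inv_mul] using
      (convexOn_rpow hmα.le).smul (inv_nonneg.2 (Gamma_pos_of_pos (by linarith)).le)
  have hderiv : HasDerivAt (fun t : ℝ => t ^ β / Gamma (1 + β))
      (β * ((n : ℝ) + 1) ^ (β - 1) / Gamma (1 + β)) ((n : ℝ) + 1) :=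
    (hasDerivAt_rpow_const (Or.inr hmα.le)).div_const _
  have hQn : ∀ t ∈ Icc (n : ℝ) (n + 1), Q t = (n : ℝ) ^ β / Gamma (1 + β) +
      slope (fun t : ℝ => t ^ β / Gamma (1 + β)) n (n + 1) * (t - n) := by
    intro t ht
    simpa [slope_def_field] using hQ n t ht
  have hbound := hconv.neg_mul_integral_sub_interpolant_le (J := j) (mem_Ici.2 n.cast_nonneg)
    (mem_Ici.2 (by positivity)) (lt_add_one _) hderiv hQn (by exact_mod_cast hkj) hα0.le hα1
  have hΓ : Gamma (2 - α) = (1 - α) * Gamma (1 - α) := by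
    rw [← Gamma_add_one (by linarith)]; ring_nf
  simp only [div_mul_eq_div_div_swap _ (Gamma (2 - α)), intervalIntegral.integral_div,
    integral_rpow_sub_rpow_div_Gamma hβ, ha, Nat.cast_sub hkj]
  push_cast
  rw [add_sub_cancel_right, add_sub_cancel_left, one_mul, hΓ,
    show (j : ℝ) - (n + 1) + 1 = j - n by ring]
  have hΓpos : 0 < Gamma (1 - α) := Gamma_pos_of_pos (by linarith)
  calc _ = -α * (∫ s in (n : ℝ)..n + 1, (s ^ β / Gamma (1 + β) - Q s) / (j - s) ^ (α + 1))
        / Gamma (1 - α) := by ring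
    _ ≤ _ := div_le_div_of_nonneg_right hbound hΓpos.le
    _ = _ := by field_simp
end
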